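/- arXiv:2405.01081 — 3 statements merged into one kernel-verified Lean document; each statement's English description precedes it below -/
import Mathlib

section
/- Let λ>0, 1<p<∞ and α∈ℝ, and let w(t)=t^α on ℝ₊=(0,∞). Then the quantity sup over bounded intervals B⊂ℝ₊ of ((1/μ(B))∫_B w(t) dμ(t))·((1/μ(B))∫_B w(t)^{−1/(p−1)} dμ(t))^{p−1} is finite (i.e. w belongs to the Muckenhoupt class A_p(μ) on the space of homogeneous type (ℝ₊,|·|,μ)) if and only if −1−2λ < α < p−1+2λ(p−1). -/
open MeasureTheory Set

private lemma integrableOn_rpow_Ioo_pos {q a c : ℝ} (ha : 0 < a) :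
    IntegrableOn (fun t : ℝ => t ^ q) (Ioo a c) := by
  rcases le_or_gt c a with h | h
  · rw [Ioo_eq_empty (by exact not_lt.mpr h)]; exact integrableOn_empty
  · have hcont : ContinuousOn (fun t : ℝ => t ^ q) (Icc a c) := by
      intro t ht
      exact (Real.continuousAt_rpow_const t q (Or.inl (ne_of_gt (lt_of_lt_of_le ha ht.1)))).continuousWithinAt
    exact (hcont.integrableOn_Icc).mono_set Ioo_subset_Icc_self

private lemma integrableOn_rpow_Ioo {q a c : ℝ} (hq : -1 < q) (ha : 0 ≤ a) :
    IntegrableOn (fun t : ℝ => t ^ q) (Ioo a c) := by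
  rcases le_or_gt c 0 with h | h
  · rw [Ioo_eq_empty (by intro hac; linarith [ha.trans_lt (hac.trans_le h)] )]
    exact integrableOn_empty
  · have h0 : IntegrableOn (fun t : ℝ => t ^ q) (Ioc 0 c) := by
      have := (intervalIntegral.intervalIntegrable_rpow' (a := 0) (b := c) hq)
      rw [intervalIntegrable_iff, uIoc_of_le h.le] at this
      exact this
    exact (h0.mono_set (by
      intro t ht
      exact ⟨lt_of_le_of_lt ha ht.1, ht.2.le⟩)).mono_set (subset_rfl)

private lemma integral_Ioo_rpow {q a c : ℝ} (hq : -1 < q) (hac : a ≤ c) :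
    ∫ t in Ioo a c, t ^ q = (c ^ (q + 1) - a ^ (q + 1)) / (q + 1) := by
  rw [← integral_Ioc_eq_integral_Ioo, ← intervalIntegral.integral_of_le hac]
  exact integral_rpow (Or.inl hq)

private lemma integral_const_Ioo (a c e : ℝ) (hac : a ≤ c) :
    ∫ _ in Ioo a c, e = (c - a) * e := by
  rw [setIntegral_const, measureReal_def, Real.volume_Ioo, ENNReal.toReal_ofReal (by linarith), smul_eq_mul]

private lemma lower_bound {q a c : ℝ} (hq : 0 ≤ q) (ha : 0 ≤ a) (hac : a < c) :
    2⁻¹ ^ (q + 1) * ((c - a) * c ^ q) ≤ ∫ t in Ioo a c, t ^ q := by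
  have hc : 0 < c := lt_of_le_of_lt ha hac
  have hhalf : (0:ℝ) < c / 2 := by linarith
  have hkey : ((2:ℝ)⁻¹) ^ q * c ^ q = (c / 2) ^ q := by
    rw [← Real.mul_rpow (by norm_num) hc.le]; ring_nf
  rcases le_or_gt (c / 2) a with h | h
  · have ha0 : 0 < a := lt_of_lt_of_le hhalf h
    have hpt : ∀ t ∈ Ioo a c, (c / 2) ^ q ≤ t ^ q := by
      intro t ht
      exact Real.rpow_le_rpow hhalf.le (le_trans h ht.1.le) hq
    have := setIntegral_mono_on ((integrableOn_const_iff).mpr (Or.inr (by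
      rw [Real.volume_Ioo]; exact ENNReal.ofReal_lt_top)))
      (integrableOn_rpow_Ioo_pos ha0) measurableSet_Ioo hpt
    rw [integral_const_Ioo _ _ _ hac.le] at this
    calc 2⁻¹ ^ (q + 1) * ((c - a) * c ^ q)
        ≤ 2⁻¹ ^ q * ((c - a) * c ^ q) := by
          apply mul_le_mul_of_nonneg_right _ (mul_nonneg (by linarith) (Real.rpow_nonneg hc.le q))
          apply Real.rpow_le_rpow_of_exponent_ge (by norm_num) (by norm_num) (by linarith)
      _ = (c - a) * (c / 2) ^ q := by rw [← hkey]; ring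
      _ ≤ _ := this
  · have hsub : Ioo (c / 2) c ⊆ Ioo a c := Ioo_subset_Ioo h.le le_rfl
    have hnn : 0 ≤ᵐ[volume.restrict (Ioo a c)] fun t : ℝ => t ^ q :=
      (ae_restrict_iff' measurableSet_Ioo).mpr (Filter.Eventually.of_forall
        (fun t ht => Real.rpow_nonneg (le_of_lt (lt_of_le_of_lt ha ht.1)) q))
    have hmono := setIntegral_mono_set (integrableOn_rpow_Ioo (by linarith) ha)
      hnn (HasSubset.Subset.eventuallyLE hsub)
    have hpt : ∀ t ∈ Ioo (c / 2) c, (c / 2) ^ q ≤ t ^ q := fun t ht =>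
      Real.rpow_le_rpow hhalf.le ht.1.le hq
    have h2 := setIntegral_mono_on ((integrableOn_const_iff).mpr (Or.inr (by
      rw [Real.volume_Ioo]; exact ENNReal.ofReal_lt_top)))
      (integrableOn_rpow_Ioo_pos hhalf) measurableSet_Ioo hpt
    rw [integral_const_Ioo _ _ _ (by linarith)] at h2
    calc 2⁻¹ ^ (q + 1) * ((c - a) * c ^ q)
        ≤ 2⁻¹ ^ (q + 1) * (c * c ^ q) := by
          apply mul_le_mul_of_nonneg_left _ (Real.rpow_nonneg (by norm_num) _)
          exact mul_le_mul_of_nonneg_right (by linarith) (Real.rpow_nonneg hc.le q)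
      _ = (c - c / 2) * (c / 2) ^ q := by
          rw [Real.rpow_add (by norm_num : (0:ℝ) < 2⁻¹), Real.rpow_one, ← hkey]; ring
      _ ≤ ∫ t in Ioo (c / 2) c, t ^ q := h2
      _ ≤ _ := hmono

private lemma upper_bound {q a c : ℝ} (hq : -1 < q) (ha : 0 ≤ a) (hac : a < c) :
    ∫ t in Ioo a c, t ^ q ≤ (2 ^ (q + 1) + 2 ^ (-q) + 2 / (q + 1)) * ((c - a) * c ^ q) := by
  have hc : 0 < c := lt_of_le_of_lt ha hac
  have hq1 : 0 < q + 1 := by linarith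
  have hcnn : 0 ≤ (c - a) * c ^ q := mul_nonneg (by linarith) (Real.rpow_nonneg hc.le q)
  have hM1 : (0:ℝ) < 2 ^ (q + 1) := Real.rpow_pos_of_pos (by norm_num) _
  have hM2 : (0:ℝ) < 2 ^ (-q) := Real.rpow_pos_of_pos (by norm_num) _
  have hM3 : (0:ℝ) < 2 / (q + 1) := by positivity
  rcases le_or_gt 0 q with hq0 | hq0
  · -- t^q ≤ c^q pointwise
    have hpt : ∀ t ∈ Ioo a c, t ^ q ≤ c ^ q := fun t ht =>
      Real.rpow_le_rpow (le_of_lt (lt_of_le_of_lt ha ht.1)) ht.2.le hq0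
    have h2 := setIntegral_mono_on (integrableOn_rpow_Ioo hq ha)
      ((integrableOn_const_iff).mpr (Or.inr (by rw [Real.volume_Ioo]; exact ENNReal.ofReal_lt_top)))
      measurableSet_Ioo hpt
    rw [integral_const_Ioo _ _ _ hac.le] at h2
    refine h2.trans ?_
    have h1 : (1:ℝ) ≤ 2 ^ (q + 1) := by
      rw [show (1:ℝ) = (2:ℝ) ^ (0:ℝ) by simp]
      exact Real.rpow_le_rpow_of_exponent_le (by norm_num) (by linarith)
    nlinarith [hcnn, hM2.le, hM3.le]
  · rcases le_or_gt (c / 2) a with h | h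
    · have hhalf : (0:ℝ) < c / 2 := by linarith
      have hpt : ∀ t ∈ Ioo a c, t ^ q ≤ (c / 2) ^ q := fun t ht =>
        Real.rpow_le_rpow_of_nonpos hhalf (le_trans h ht.1.le) hq0.le
      have h2 := setIntegral_mono_on (integrableOn_rpow_Ioo hq ha)
        ((integrableOn_const_iff).mpr (Or.inr (by rw [Real.volume_Ioo]; exact ENNReal.ofReal_lt_top)))
        measurableSet_Ioo hpt
      rw [integral_const_Ioo _ _ _ hac.le] at h2
      have hkey : (c / 2) ^ q = 2 ^ (-q) * c ^ q := by
        rw [Real.div_rpow hc.le (by norm_num), Real.rpow_neg (by norm_num : (0:ℝ) ≤ 2)]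
        ring
      refine h2.trans ?_
      rw [hkey]
      nlinarith [Real.rpow_nonneg (le_of_lt hc) q, mul_nonneg (sub_nonneg.mpr hac.le)
        (mul_nonneg hM2.le (Real.rpow_nonneg hc.le q))]
    · -- a < c/2 : extend to (0, c)
      have hnn : 0 ≤ᵐ[volume.restrict (Ioo 0 c)] fun t : ℝ => t ^ q :=
        (ae_restrict_iff' measurableSet_Ioo).mpr (Filter.Eventually.of_forall
          (fun t ht => Real.rpow_nonneg ht.1.le q))
      have hmono := setIntegral_mono_set (integrableOn_rpow_Ioo hq le_rfl)
        hnn (HasSubset.Subset.eventuallyLE (Ioo_subset_Ioo ha le_rfl))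
      rw [integral_Ioo_rpow hq hc.le, Real.zero_rpow (ne_of_gt hq1), sub_zero] at hmono
      refine hmono.trans ?_
      have hck : c ^ (q + 1) = c * c ^ q := by
        rw [Real.rpow_add hc, Real.rpow_one]; ring
      rw [hck]
      rw [div_le_iff₀ hq1] at *
      have hgoal : c * c ^ q ≤ 2 / (q + 1) * ((c - a) * c ^ q) * (q + 1) := by
        have : 2 / (q + 1) * ((c - a) * c ^ q) * (q + 1) = 2 * ((c - a) * c ^ q) := by
          field_simp
        rw [this]
        nlinarith [Real.rpow_nonneg hc.le q]
      refine hgoal.trans ?_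
      nlinarith [mul_nonneg hcnn hq1.le]

private lemma D_le_aux {lam a : ℝ} (hlam : 0 < lam) (ha : 0 ≤ a) :
    ∫ t in Ioo a 1, t ^ (2 * lam) ≤ 1 / (2 * lam + 1) := by
  have hnn : 0 ≤ᵐ[volume.restrict (Ioo (0:ℝ) 1)] fun t : ℝ => t ^ (2 * lam) :=
    (ae_restrict_iff' measurableSet_Ioo).mpr (Filter.Eventually.of_forall
      (fun t ht => Real.rpow_nonneg ht.1.le _))
  have hmono := setIntegral_mono_set (integrableOn_rpow_Ioo (by linarith) le_rfl)
    hnn (HasSubset.Subset.eventuallyLE (Ioo_subset_Ioo ha le_rfl))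
  refine hmono.trans ?_
  rw [integral_Ioo_rpow (by linarith) zero_le_one, Real.one_rpow,
    Real.zero_rpow (by positivity : 2 * lam + 1 ≠ 0), sub_zero]

private lemma integral_inv_Ioo {a : ℝ} (ha : 0 < a) (ha1 : a ≤ 1) :
    ∫ t in Ioo a 1, t⁻¹ = -Real.log a := by
  rw [← integral_Ioc_eq_integral_Ioo, ← intervalIntegral.integral_of_le ha1,
    integral_inv (by rw [Set.uIcc_of_le ha1]; rintro ⟨h0, _⟩; linarith)]
  rw [one_div, Real.log_inv]

private lemma log_lower {s a : ℝ} (hs : s ≤ -1) (ha : 0 < a) (ha1 : a < 1) :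
    -Real.log a ≤ ∫ t in Ioo a 1, t ^ s := by
  rw [← integral_inv_Ioo ha ha1.le]
  have hinv : IntegrableOn (fun t : ℝ => t⁻¹) (Ioo a 1) := by
    have hcont : ContinuousOn (fun t : ℝ => t⁻¹) (Icc a 1) :=
      ContinuousOn.inv₀ continuousOn_id (fun t ht => ne_of_gt (lt_of_lt_of_le ha ht.1))
    exact hcont.integrableOn_Icc.mono_set Ioo_subset_Icc_self
  refine setIntegral_mono_on hinv (integrableOn_rpow_Ioo_pos ha) measurableSet_Ioo ?_
  intro t ht
  have h := Real.rpow_le_rpow_of_exponent_ge (lt_of_lt_of_le ha ht.1.le) ht.2.le hs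
  rwa [Real.rpow_neg_one] at h

set_option maxHeartbeats 2000000 in
/-- For `λ > 0`, `1 < p < ∞`, `α ∈ ℝ`, the power weight `w(t) = t^α` satisfies
the Muckenhoupt `A_p(μ)` condition on `(ℝ₊, |·|, dμ = t^{2λ} dt)` (i.e. the sup over bounded
intervals `B ⊂ ℝ₊` of `((1/μ(B)) ∫_B w dμ) · ((1/μ(B)) ∫_B w^{-1/(p-1)} dμ)^{p-1}` is finite)
if and only if `-1 - 2λ < α < p - 1 + 2λ(p-1)`. -/
theorem power_weight_mem_Ap_mu_iff (lam p α : ℝ) (hlam : 0 < lam) (hp : 1 < p) :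
    (∃ C : ℝ, ∀ a c : ℝ, 0 ≤ a → a < c →
      ((∫ t in Ioo a c, t ^ α * t ^ (2 * lam)) / (∫ t in Ioo a c, t ^ (2 * lam))) *
        ((∫ t in Ioo a c, (t ^ α) ^ (-(1 / (p - 1))) * t ^ (2 * lam)) /
            (∫ t in Ioo a c, t ^ (2 * lam))) ^ (p - 1) ≤ C) ↔
      (-1 - 2 * lam < α ∧ α < p - 1 + 2 * lam * (p - 1)) := by
  have hp1 : (0:ℝ) < p - 1 := by linarith
  set β : ℝ := α * (-(1 / (p - 1))) with hβ
  have hβval : β = -α / (p - 1) := by rw [hβ]; ring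
  have hβp : β * (p - 1) = -α := by rw [hβval]; field_simp
  have hrw1 : ∀ a c : ℝ, 0 ≤ a →
      (∫ t in Ioo a c, t ^ α * t ^ (2 * lam)) = ∫ t in Ioo a c, t ^ (α + 2 * lam) := by
    intro a c ha
    refine setIntegral_congr_fun measurableSet_Ioo (fun t ht => ?_)
    exact (Real.rpow_add (lt_of_le_of_lt ha ht.1) _ _).symm
  have hrw2 : ∀ a c : ℝ, 0 ≤ a →
      (∫ t in Ioo a c, (t ^ α) ^ (-(1 / (p - 1))) * t ^ (2 * lam))
        = ∫ t in Ioo a c, t ^ (β + 2 * lam) := by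
    intro a c ha
    refine setIntegral_congr_fun measurableSet_Ioo (fun t ht => ?_)
    have ht0 : (0:ℝ) < t := lt_of_le_of_lt ha ht.1
    rw [Real.rpow_add ht0, hβ, Real.rpow_mul ht0.le α (-(1 / (p - 1)))]
  set s : ℝ := α + 2 * lam with hsdef
  set r : ℝ := β + 2 * lam with hrdef
  constructor
  · rintro ⟨C, hC⟩
    have hG : ∀ a c : ℝ, 0 ≤ a → a < c →
        ((∫ t in Ioo a c, t ^ s) / (∫ t in Ioo a c, t ^ (2 * lam))) *
          ((∫ t in Ioo a c, t ^ r) / (∫ t in Ioo a c, t ^ (2 * lam))) ^ (p - 1) ≤ C := by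
      intro a c ha hac
      rw [← hrw1 a c ha, ← hrw2 a c ha]
      exact hC a c ha hac
    constructor
    · by_contra hcon
      push_neg at hcon
      have hs_le : s ≤ -1 := by rw [hsdef]; linarith
      have hβpos : 0 < β := by rw [hβval]; exact div_pos (by linarith) hp1
      have hr0 : 0 ≤ r := by rw [hrdef]; linarith
      set K2 : ℝ := ((2:ℝ)⁻¹ ^ (r + 2) * (2 * lam + 1)) ^ (p - 1) with hK2def
      have hK2 : 0 < K2 := Real.rpow_pos_of_pos
        (mul_pos (Real.rpow_pos_of_pos (by norm_num) _) (by linarith)) _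
      set X : ℝ := max 1 ((C + 1) / ((2 * lam + 1) * K2)) with hX
      have hX1 : 1 ≤ X := le_max_left _ _
      set a : ℝ := min (1/2 : ℝ) (Real.exp (-X)) with haa
      have ha0 : 0 < a := lt_min (by norm_num) (Real.exp_pos _)
      have ha2 : a ≤ 1/2 := min_le_left _ _
      have ha1 : a < 1 := by linarith
      have hlog : X ≤ -Real.log a := by
        have h := Real.log_le_log ha0 (min_le_right (1/2 : ℝ) (Real.exp (-X)))
        rw [Real.log_exp] at h
        linarith
      have hD_le := D_le_aux hlam ha0.le
      have hDpos : 0 < ∫ t in Ioo a 1, t ^ (2 * lam) :=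
        lt_of_lt_of_le (mul_pos (Real.rpow_pos_of_pos (by norm_num) _)
          (mul_pos (by linarith) (Real.rpow_pos_of_pos one_pos _)))
          (lower_bound (by linarith) ha0.le ha1)
      have hI1 : X ≤ ∫ t in Ioo a 1, t ^ s := hlog.trans (log_lower hs_le ha0 ha1)
      have hb : (0:ℝ) ≤ (2:ℝ)⁻¹ ^ (r + 2) := (Real.rpow_pos_of_pos (by norm_num) _).le
      have hI2 : (2:ℝ)⁻¹ ^ (r + 2) ≤ ∫ t in Ioo a 1, t ^ r := by
        have h := lower_bound hr0 ha0.le ha1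
        rw [Real.one_rpow, mul_one] at h
        refine le_trans ?_ h
        rw [show r + 2 = (r + 1) + 1 by ring,
          Real.rpow_add (by norm_num : (0:ℝ) < 2⁻¹), Real.rpow_one]
        have := Real.rpow_pos_of_pos (show (0:ℝ) < 2⁻¹ by norm_num) (r + 1)
        nlinarith
      have hXnn : (0:ℝ) ≤ X := by linarith
      have step1 : X * (2 * lam + 1)
          ≤ (∫ t in Ioo a 1, t ^ s) / (∫ t in Ioo a 1, t ^ (2 * lam)) := by
        rw [le_div_iff₀ hDpos]
        have h1 : X * (2 * lam + 1) * (∫ t in Ioo a 1, t ^ (2 * lam))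
            ≤ X * (2 * lam + 1) * (1 / (2 * lam + 1)) :=
          mul_le_mul_of_nonneg_left hD_le (mul_nonneg hXnn (by linarith))
        have h2 : X * (2 * lam + 1) * (1 / (2 * lam + 1)) = X := by field_simp
        linarith
      have step2 : (2:ℝ)⁻¹ ^ (r + 2) * (2 * lam + 1)
          ≤ (∫ t in Ioo a 1, t ^ r) / (∫ t in Ioo a 1, t ^ (2 * lam)) := by
        rw [le_div_iff₀ hDpos]
        have h1 : (2:ℝ)⁻¹ ^ (r + 2) * (2 * lam + 1) * (∫ t in Ioo a 1, t ^ (2 * lam))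
            ≤ (2:ℝ)⁻¹ ^ (r + 2) * (2 * lam + 1) * (1 / (2 * lam + 1)) :=
          mul_le_mul_of_nonneg_left hD_le (mul_nonneg hb (by linarith))
        have h2 : (2:ℝ)⁻¹ ^ (r + 2) * (2 * lam + 1) * (1 / (2 * lam + 1))
            = (2:ℝ)⁻¹ ^ (r + 2) := by field_simp
        linarith
      have hfin := hG a 1 ha0.le ha1
      have step3 : K2 ≤ ((∫ t in Ioo a 1, t ^ r) / (∫ t in Ioo a 1, t ^ (2 * lam))) ^ (p - 1) := by
        rw [hK2def]
        exact Real.rpow_le_rpow (mul_nonneg hb (by linarith)) step2 (by linarith)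
      have hI1D : 0 ≤ (∫ t in Ioo a 1, t ^ s) / (∫ t in Ioo a 1, t ^ (2 * lam)) :=
        le_trans (mul_nonneg hXnn (by linarith)) step1
      have hbig : X * (2 * lam + 1) * K2 ≤ C :=
        le_trans (mul_le_mul step1 step3 hK2.le hI1D) hfin
      have hXge : (C + 1) / ((2 * lam + 1) * K2) ≤ X := le_max_right _ _
      have hposK : 0 < (2 * lam + 1) * K2 := mul_pos (by linarith) hK2
      have hC1 : C + 1 ≤ X * ((2 * lam + 1) * K2) := (div_le_iff₀ hposK).mp hXge
      have hbig' : X * ((2 * lam + 1) * K2) ≤ C := by rw [← mul_assoc]; exact hbig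
      linarith
    · by_contra hcon
      push_neg at hcon
      have hr_le : r ≤ -1 := by
        have hβle : β ≤ -1 - 2 * lam := by
          rw [hβval, div_le_iff₀ hp1]; nlinarith
        rw [hrdef]; linarith
      have hs0 : 0 ≤ s := by rw [hsdef]; nlinarith
      set K1 : ℝ := (2:ℝ)⁻¹ ^ (s + 2) * (2 * lam + 1) with hK1def
      have hK1 : 0 < K1 := mul_pos (Real.rpow_pos_of_pos (by norm_num) _) (by linarith)
      set Z : ℝ := max 1 ((C + 1) / K1) with hZdef
      have hZ1 : 1 ≤ Z := le_max_left _ _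
      set X : ℝ := max 1 (Z ^ (p - 1)⁻¹ / (2 * lam + 1)) with hX
      have hX1 : 1 ≤ X := le_max_left _ _
      set a : ℝ := min (1/2 : ℝ) (Real.exp (-X)) with haa
      have ha0 : 0 < a := lt_min (by norm_num) (Real.exp_pos _)
      have ha2 : a ≤ 1/2 := min_le_left _ _
      have ha1 : a < 1 := by linarith
      have hlog : X ≤ -Real.log a := by
        have h := Real.log_le_log ha0 (min_le_right (1/2 : ℝ) (Real.exp (-X)))
        rw [Real.log_exp] at h
        linarith
      have hD_le := D_le_aux hlam ha0.le
      have hDpos : 0 < ∫ t in Ioo a 1, t ^ (2 * lam) :=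
        lt_of_lt_of_le (mul_pos (Real.rpow_pos_of_pos (by norm_num) _)
          (mul_pos (by linarith) (Real.rpow_pos_of_pos one_pos _)))
          (lower_bound (by linarith) ha0.le ha1)
      have hI2 : X ≤ ∫ t in Ioo a 1, t ^ r := hlog.trans (log_lower hr_le ha0 ha1)
      have hb : (0:ℝ) ≤ (2:ℝ)⁻¹ ^ (s + 2) := (Real.rpow_pos_of_pos (by norm_num) _).le
      have hI1 : (2:ℝ)⁻¹ ^ (s + 2) ≤ ∫ t in Ioo a 1, t ^ s := by
        have h := lower_bound hs0 ha0.le ha1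
        rw [Real.one_rpow, mul_one] at h
        refine le_trans ?_ h
        rw [show s + 2 = (s + 1) + 1 by ring,
          Real.rpow_add (by norm_num : (0:ℝ) < 2⁻¹), Real.rpow_one]
        have := Real.rpow_pos_of_pos (show (0:ℝ) < 2⁻¹ by norm_num) (s + 1)
        nlinarith
      have hXnn : (0:ℝ) ≤ X := by linarith
      have step1 : K1 ≤ (∫ t in Ioo a 1, t ^ s) / (∫ t in Ioo a 1, t ^ (2 * lam)) := by
        rw [hK1def, le_div_iff₀ hDpos]
        have h1 : (2:ℝ)⁻¹ ^ (s + 2) * (2 * lam + 1) * (∫ t in Ioo a 1, t ^ (2 * lam))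
            ≤ (2:ℝ)⁻¹ ^ (s + 2) * (2 * lam + 1) * (1 / (2 * lam + 1)) :=
          mul_le_mul_of_nonneg_left hD_le (mul_nonneg hb (by linarith))
        have h2 : (2:ℝ)⁻¹ ^ (s + 2) * (2 * lam + 1) * (1 / (2 * lam + 1))
            = (2:ℝ)⁻¹ ^ (s + 2) := by field_simp
        linarith
      have step2 : X * (2 * lam + 1)
          ≤ (∫ t in Ioo a 1, t ^ r) / (∫ t in Ioo a 1, t ^ (2 * lam)) := by
        rw [le_div_iff₀ hDpos]
        have h1 : X * (2 * lam + 1) * (∫ t in Ioo a 1, t ^ (2 * lam))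
            ≤ X * (2 * lam + 1) * (1 / (2 * lam + 1)) :=
          mul_le_mul_of_nonneg_left hD_le (mul_nonneg hXnn (by linarith))
        have h2 : X * (2 * lam + 1) * (1 / (2 * lam + 1)) = X := by field_simp
        linarith
      have step3 : Z ≤ ((∫ t in Ioo a 1, t ^ r) / (∫ t in Ioo a 1, t ^ (2 * lam))) ^ (p - 1) := by
        have hZX : Z ^ (p - 1)⁻¹ ≤ X * (2 * lam + 1) := by
          have h := le_max_right (1:ℝ) (Z ^ (p - 1)⁻¹ / (2 * lam + 1))
          rw [div_le_iff₀ (by linarith : (0:ℝ) < 2 * lam + 1)] at h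
          exact h
        have h := Real.rpow_le_rpow (Real.rpow_nonneg (by linarith : (0:ℝ) ≤ Z) _)
          (hZX.trans step2) (by linarith : (0:ℝ) ≤ p - 1)
        rwa [Real.rpow_inv_rpow (by linarith : (0:ℝ) ≤ Z) (ne_of_gt hp1)] at h
      have hfin := hG a 1 ha0.le ha1
      have hbig : K1 * Z ≤ C :=
        le_trans (mul_le_mul step1 step3 (by linarith)
          (le_trans hK1.le step1)) hfin
      have hZge : (C + 1) / K1 ≤ Z := le_max_right _ _
      have hC1 : C + 1 ≤ Z * K1 := (div_le_iff₀ hK1).mp hZge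
      nlinarith
  · rintro ⟨h1, h2⟩
    have hs : -1 < s := by rw [hsdef]; linarith
    have hr : -1 < r := by
      have : -1 - 2 * lam < -α / (p - 1) := by
        rw [lt_div_iff₀ hp1]; nlinarith
      rw [hrdef, hβval]; linarith
    set m : ℝ := (2:ℝ)⁻¹ ^ (2 * lam + 1) with hm
    have hm0 : 0 < m := Real.rpow_pos_of_pos (by norm_num) _
    set Ms : ℝ := 2 ^ (s + 1) + 2 ^ (-s) + 2 / (s + 1) with hMs
    set Mr : ℝ := 2 ^ (r + 1) + 2 ^ (-r) + 2 / (r + 1) with hMr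
    have hMs0 : 0 < Ms := by
      rw [hMs]
      exact add_pos (add_pos (Real.rpow_pos_of_pos two_pos _)
        (Real.rpow_pos_of_pos two_pos _)) (div_pos two_pos (by linarith))
    have hMr0 : 0 < Mr := by
      rw [hMr]
      exact add_pos (add_pos (Real.rpow_pos_of_pos two_pos _)
        (Real.rpow_pos_of_pos two_pos _)) (div_pos two_pos (by linarith))
    refine ⟨(Ms / m) * (Mr / m) ^ (p - 1), ?_⟩
    intro a c ha hac
    rw [hrw1 a c ha, hrw2 a c ha]
    have hc : 0 < c := lt_of_le_of_lt ha hac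
    have hca : 0 < c - a := by linarith
    have hD_low := lower_bound (q := 2 * lam) (by linarith) ha hac
    have hDpos : 0 < ∫ t in Ioo a c, t ^ (2 * lam) :=
      lt_of_lt_of_le (by
        apply mul_pos (Real.rpow_pos_of_pos (by norm_num) _)
        exact mul_pos hca (Real.rpow_pos_of_pos hc _)) hD_low
    have hI1nn : 0 ≤ ∫ t in Ioo a c, t ^ s :=
      setIntegral_nonneg measurableSet_Ioo
        (fun t ht => Real.rpow_nonneg (le_of_lt (lt_of_le_of_lt ha ht.1)) _)
    have hI2nn : 0 ≤ ∫ t in Ioo a c, t ^ r :=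
      setIntegral_nonneg measurableSet_Ioo
        (fun t ht => Real.rpow_nonneg (le_of_lt (lt_of_le_of_lt ha ht.1)) _)
    have hA1 : (∫ t in Ioo a c, t ^ s) / (∫ t in Ioo a c, t ^ (2 * lam))
        ≤ Ms / m * c ^ α := by
      have hub := upper_bound hs ha hac
      have h := div_le_div₀ (le_trans hI1nn hub) hub
        (mul_pos hm0 (mul_pos hca (Real.rpow_pos_of_pos hc _))) hD_low
      refine h.trans (le_of_eq ?_)
      have hcs : c ^ s = c ^ α * c ^ (2 * lam) := by
        rw [hsdef, Real.rpow_add hc]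
      rw [hcs, ← hMs]
      have hne1 : (c - a) ≠ 0 := ne_of_gt hca
      have hne2 : c ^ (2 * lam) ≠ 0 := ne_of_gt (Real.rpow_pos_of_pos hc _)
      field_simp
    have hA2 : (∫ t in Ioo a c, t ^ r) / (∫ t in Ioo a c, t ^ (2 * lam))
        ≤ Mr / m * c ^ β := by
      have hub := upper_bound hr ha hac
      have h := div_le_div₀ (le_trans hI2nn hub) hub
        (mul_pos hm0 (mul_pos hca (Real.rpow_pos_of_pos hc _))) hD_low
      refine h.trans (le_of_eq ?_)
      have hcs : c ^ r = c ^ β * c ^ (2 * lam) := by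
        rw [hrdef, Real.rpow_add hc]
      rw [hcs, ← hMr]
      have hne1 : (c - a) ≠ 0 := ne_of_gt hca
      have hne2 : c ^ (2 * lam) ≠ 0 := ne_of_gt (Real.rpow_pos_of_pos hc _)
      field_simp
    have hq2nn : 0 ≤ (∫ t in Ioo a c, t ^ r) / (∫ t in Ioo a c, t ^ (2 * lam)) :=
      div_nonneg hI2nn hDpos.le
    calc (∫ t in Ioo a c, t ^ s) / (∫ t in Ioo a c, t ^ (2 * lam)) *
          ((∫ t in Ioo a c, t ^ r) / (∫ t in Ioo a c, t ^ (2 * lam))) ^ (p - 1)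
        ≤ (Ms / m * c ^ α) * ((Mr / m) * c ^ β) ^ (p - 1) := by
          refine mul_le_mul hA1 (Real.rpow_le_rpow hq2nn hA2 (by linarith))
            (Real.rpow_nonneg hq2nn _) ?_
          exact mul_nonneg (div_nonneg hMs0.le hm0.le) (Real.rpow_nonneg hc.le _)
      _ = (Ms / m) * (Mr / m) ^ (p - 1) * (c ^ α * c ^ (β * (p - 1))) := by
          rw [Real.mul_rpow (div_nonneg hMr0.le hm0.le) (Real.rpow_nonneg hc.le _),
            ← Real.rpow_mul hc.le]
          ring
      _ = (Ms / m) * (Mr / m) ^ (p - 1) := by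
          rw [← Real.rpow_add hc]
          have : α + β * (p - 1) = 0 := by rw [hβp]; ring
          rw [this, Real.rpow_zero, mul_one]
end

section
/- Let λ>0, 1<p<∞ with p'=p/(p−1), α∈ℝ, and let w(t)=t^α on ℝ₊=(0,∞). Then the quantity sup over bounded intervals B⊂ℝ₊ of ((1/ν_λ(B))∫_B w(t)dt)·((1/ν_λ(B))∫_B t^{(2λ+1)p'} w(t)^{−1/(p−1)}dt)^{p−1}, where ν_λ(B)=∫_B t^{2λ+1}dt, is finite (i.e. w belongs to the class Ã_{p,λ}) if and only if −1 < α < p−1+(2λ+1)p. -/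
open MeasureTheory Set
open Real

lemma tAp_integral_rpow_Ioo {a c s : ℝ} (h0 : 0 ≤ a) (hac : a ≤ c) (hs : -1 < s) :
    ∫ t in Ioo a c, t ^ s = (c ^ (s+1) - a ^ (s+1)) / (s+1) := by
  rw [← integral_Ioc_eq_integral_Ioo, ← intervalIntegral.integral_of_le hac]
  exact integral_rpow (Or.inl hs)

lemma tAp_integrableOn_rpow_Ioo {a c s : ℝ} (ha : 0 < a) :
    IntegrableOn (fun t : ℝ => t ^ s) (Ioo a c) := by
  have : IntegrableOn (fun t : ℝ => t ^ s) (Icc a c) := by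
    apply ContinuousOn.integrableOn_Icc
    exact continuousOn_id.rpow_const (fun t ht => Or.inl (ne_of_gt (lt_of_lt_of_le ha ht.1)))
  exact this.mono_set Ioo_subset_Icc_self

lemma tAp_integrableOn_rpow_Ioo' {a c s : ℝ} (hs : -1 < s) (hac : a ≤ c) :
    IntegrableOn (fun t : ℝ => t ^ s) (Ioo a c) :=
  ((intervalIntegrable_iff_integrableOn_Ioc_of_le hac).1
    (intervalIntegral.intervalIntegrable_rpow' hs)).mono_set Ioo_subset_Ioc_self

lemma tAp_norm_upper {x θ : ℝ} (hx : 0 ≤ x) (hx1 : x ≤ 1) (hθ : 0 < θ) :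
    1 - x ^ θ ≤ max 1 θ * (1 - x) := by
  rcases le_total 1 θ with h1 | h1
  · have hb := one_add_mul_self_le_rpow_one_add (by linarith : (-1:ℝ) ≤ x - 1) h1
    rw [show (1:ℝ) + (x-1) = x by ring] at hb
    have : max 1 θ = θ := max_eq_right h1
    nlinarith
  · have hxθ : x ≤ x ^ θ := by
      rcases eq_or_lt_of_le hx with h | h
      · rw [← h]; rw [Real.zero_rpow hθ.ne']
      · calc x = x ^ (1:ℝ) := (Real.rpow_one x).symm
          _ ≤ x ^ θ := Real.rpow_le_rpow_of_exponent_ge h hx1 h1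
    have : max 1 θ = 1 := max_eq_left h1
    nlinarith

lemma tAp_norm_lower {x θ : ℝ} (hx : 0 ≤ x) (hx1 : x ≤ 1) (hθ : 0 < θ) :
    min 1 θ * (1 - x) ≤ 1 - x ^ θ := by
  rcases le_total 1 θ with h1 | h1
  · have hxθ : x ^ θ ≤ x := by
      rcases eq_or_lt_of_le hx with h | h
      · rw [← h, Real.zero_rpow hθ.ne']
      · calc x ^ θ ≤ x ^ (1:ℝ) := Real.rpow_le_rpow_of_exponent_ge h hx1 h1
          _ = x := Real.rpow_one x
    have : min 1 θ = 1 := min_eq_left h1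
    nlinarith
  · -- x^θ ≤ 1 + θ(x-1)
    have hy : (0:ℝ) ≤ x ^ θ := Real.rpow_nonneg hx θ
    have hb := one_add_mul_self_le_rpow_one_add (by linarith : (-1:ℝ) ≤ x ^ θ - 1)
      (one_le_one_div hθ h1)
    rw [show (1:ℝ) + (x ^ θ - 1) = x ^ θ by ring, ← Real.rpow_mul hx,
      mul_one_div_cancel hθ.ne', Real.rpow_one] at hb
    have hmin : min 1 θ = θ := min_eq_right h1
    rw [hmin]
    have h2 : (x ^ θ - 1) / θ ≤ x - 1 := by
      have := sub_le_sub_right hb 1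
      calc (x ^ θ - 1)/θ = 1/θ * (x^θ - 1) := by ring
        _ ≤ x - 1 := by linarith
    rw [div_le_iff₀ hθ] at h2
    nlinarith

lemma tAp_upper {a c θ : ℝ} (h0 : 0 ≤ a) (hac : a ≤ c) (hθ : 0 < θ) :
    c ^ θ - a ^ θ ≤ max 1 θ * (c ^ (θ - 1) * (c - a)) := by
  rcases eq_or_lt_of_le (h0.trans hac) with hc | hc
  · have ha : a = 0 := le_antisymm (hac.trans hc.ge) h0
    simp [ha, ← hc, Real.zero_rpow hθ.ne']
  · have hcθ : (0:ℝ) < c ^ θ := Real.rpow_pos_of_pos hc θ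
    have hx0 : 0 ≤ a / c := div_nonneg h0 hc.le
    have hx1 : a / c ≤ 1 := div_le_one_of_le₀ hac hc.le
    have key := mul_le_mul_of_nonneg_left (tAp_norm_upper hx0 hx1 hθ) hcθ.le
    calc c ^ θ - a ^ θ = c ^ θ * (1 - (a / c) ^ θ) := by
          rw [Real.div_rpow h0 hc.le]; field_simp
      _ ≤ c ^ θ * (max 1 θ * (1 - a / c)) := key
      _ = max 1 θ * (c ^ (θ - 1) * (c - a)) := by
          rw [Real.rpow_sub hc, Real.rpow_one]; field_simp

lemma tAp_lower {a c θ : ℝ} (h0 : 0 ≤ a) (hac : a ≤ c) (hθ : 0 < θ) :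
    min 1 θ * (c ^ (θ - 1) * (c - a)) ≤ c ^ θ - a ^ θ := by
  rcases eq_or_lt_of_le (h0.trans hac) with hc | hc
  · have ha : a = 0 := le_antisymm (hac.trans hc.ge) h0
    simp [ha, ← hc, Real.zero_rpow hθ.ne']
  · have hcθ : (0:ℝ) < c ^ θ := Real.rpow_pos_of_pos hc θ
    have hx0 : 0 ≤ a / c := div_nonneg h0 hc.le
    have hx1 : a / c ≤ 1 := div_le_one_of_le₀ hac hc.le
    have key := mul_le_mul_of_nonneg_left (tAp_norm_lower hx0 hx1 hθ) hcθ.le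
    calc min 1 θ * (c ^ (θ - 1) * (c - a)) = c ^ θ * (min 1 θ * (1 - a / c)) := by
          rw [Real.rpow_sub hc, Real.rpow_one]; field_simp
      _ ≤ c ^ θ * (1 - (a / c) ^ θ) := key
      _ = c ^ θ - a ^ θ := by rw [Real.div_rpow h0 hc.le]; field_simp

lemma tAp_ratio_le {a c s β : ℝ} (h0 : 0 ≤ a) (hac : a < c) (hs : -1 < s) (hβ : -1 < β) :
    (∫ t in Ioo a c, t ^ s) / (∫ t in Ioo a c, t ^ β)
      ≤ (max 1 (s + 1) * (β + 1) / ((s + 1) * min 1 (β + 1))) * c ^ (s - β) := by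
  have hc : 0 < c := h0.trans_lt hac
  have hca : 0 < c - a := by linarith
  have hs1 : (0:ℝ) < s + 1 := by linarith
  have hβ1 : (0:ℝ) < β + 1 := by linarith
  have hmβ : (0:ℝ) < min 1 (β + 1) := lt_min one_pos hβ1
  have hcs : (0:ℝ) < c ^ s := Real.rpow_pos_of_pos hc s
  have hcβ : (0:ℝ) < c ^ β := Real.rpow_pos_of_pos hc β
  rw [tAp_integral_rpow_Ioo h0 hac.le hs, tAp_integral_rpow_Ioo h0 hac.le hβ]
  have hup : c ^ (s+1) - a ^ (s+1) ≤ max 1 (s+1) * (c ^ s * (c - a)) := by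
    have := tAp_upper h0 hac.le hs1
    rwa [show s + 1 - 1 = s by ring] at this
  have hlo : min 1 (β+1) * (c ^ β * (c - a)) ≤ c ^ (β+1) - a ^ (β+1) := by
    have := tAp_lower h0 hac.le hβ1
    rwa [show β + 1 - 1 = β by ring] at this
  have hUnn : 0 ≤ max 1 (s+1) * (c ^ s * (c - a)) / (s+1) :=
    div_nonneg (mul_nonneg (le_max_iff.2 (Or.inl zero_le_one)) (by positivity)) hs1.le
  have hLpos : 0 < min 1 (β+1) * (c ^ β * (c - a)) / (β+1) := by positivity
  calc (c ^ (s+1) - a ^ (s+1)) / (s+1) / ((c ^ (β+1) - a ^ (β+1)) / (β+1))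
      ≤ (max 1 (s+1) * (c ^ s * (c - a)) / (s+1)) / (min 1 (β+1) * (c ^ β * (c - a)) / (β+1)) := by
        apply div_le_div₀ hUnn (by gcongr) hLpos (by gcongr)
    _ = (max 1 (s + 1) * (β + 1) / ((s + 1) * min 1 (β + 1))) * c ^ (s - β) := by
        rw [Real.rpow_sub hc]
        field_simp

lemma tAp_congr {a c α P Q : ℝ} (h0 : 0 ≤ a) :
    ∫ t in Ioo a c, t ^ P * (t ^ α) ^ Q = ∫ t in Ioo a c, t ^ (P + α * Q) := by
  refine setIntegral_congr_fun measurableSet_Ioo fun t ht => ?_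
  have ht0 : 0 < t := lt_of_le_of_lt h0 ht.1
  rw [Real.rpow_add ht0, Real.rpow_mul ht0.le]

lemma tAp_halfint_pos (s : ℝ) : 0 < ∫ t in Ioo (1/2:ℝ) 1, t ^ s := by
  obtain ⟨m, hm0, hm⟩ : ∃ m : ℝ, 0 < m ∧ ∀ t ∈ Ioo (1/2:ℝ) 1, m ≤ t ^ s := by
    rcases le_total 0 s with h | h
    · exact ⟨(1/2:ℝ) ^ s, Real.rpow_pos_of_pos (by norm_num) s,
        fun t ht => Real.rpow_le_rpow (by norm_num) ht.1.le h⟩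
    · exact ⟨1, one_pos, fun t ht =>
        Real.one_le_rpow_of_pos_of_le_one_of_nonpos (by linarith [ht.1]) ht.2.le h⟩
  have hint : IntegrableOn (fun t : ℝ => t ^ s) (Ioo (1/2:ℝ) 1) :=
    tAp_integrableOn_rpow_Ioo (by norm_num)
  have h1 : ∫ t in Ioo (1/2:ℝ) 1, m ≤ ∫ t in Ioo (1/2:ℝ) 1, t ^ s :=
    setIntegral_mono_on (integrableOn_const measure_Ioo_lt_top.ne) hint measurableSet_Ioo hm
  have h2 : ∫ t in Ioo (1/2:ℝ) 1, m = m / 2 := by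
    rw [setIntegral_const, Real.volume_real_Ioo]
    norm_num
    ring
  rw [h2] at h1
  linarith

lemma tAp_nu_bounds {β ε : ℝ} (hβ : -1 < β) (hε : 0 < ε) (hε1 : ε < 1) :
    0 < ∫ t in Ioo ε 1, t ^ β ∧ (∫ t in Ioo ε 1, t ^ β) ≤ 1 / (β + 1) := by
  have hβ1 : (0:ℝ) < β + 1 := by linarith
  rw [tAp_integral_rpow_Ioo hε.le hε1.le hβ, Real.one_rpow]
  have h1 : ε ^ (β + 1) < 1 := Real.rpow_lt_one hε.le hε1 hβ1
  have h2 : 0 ≤ ε ^ (β + 1) := Real.rpow_nonneg hε.le _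
  constructor
  · exact div_pos (by linarith) hβ1
  · gcongr
    linarith

lemma tAp_log_integral {ε : ℝ} (hε : 0 < ε) (hε1 : ε ≤ 1) :
    ∫ t in Ioo ε 1, t ^ (-1:ℝ) = -Real.log ε := by
  have : ∫ t in Ioo ε 1, t ^ (-1:ℝ) = ∫ t in Ioo ε 1, t⁻¹ :=
    setIntegral_congr_fun measurableSet_Ioo fun t _ => Real.rpow_neg_one t
  rw [this, ← integral_Ioc_eq_integral_Ioo, ← intervalIntegral.integral_of_le hε1,
    integral_inv (by simp [Set.uIcc_of_le hε1]; linarith), one_div,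
    Real.log_inv]

lemma tAp_lower_log {s β ε : ℝ} (hs : s ≤ -1) (hβ : -1 < β) (hε : 0 < ε) (hε1 : ε < 1) :
    (-Real.log ε) * (β + 1) ≤ (∫ t in Ioo ε 1, t ^ s) / (∫ t in Ioo ε 1, t ^ β) := by
  obtain ⟨hν0, hν1⟩ := tAp_nu_bounds hβ hε hε1
  have hβ1 : (0:ℝ) < β + 1 := by linarith
  have hL : 0 ≤ -Real.log ε := by
    have := Real.log_nonpos hε.le hε1.le
    linarith
  have hnum : -Real.log ε ≤ ∫ t in Ioo ε 1, t ^ s := by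
    rw [← tAp_log_integral hε hε1.le]
    refine setIntegral_mono_on (tAp_integrableOn_rpow_Ioo hε) (tAp_integrableOn_rpow_Ioo hε)
      measurableSet_Ioo fun t ht => ?_
    exact Real.rpow_le_rpow_of_exponent_ge (hε.trans ht.1) ht.2.le hs
  calc (-Real.log ε) * (β + 1) ≤ (-Real.log ε) / (∫ t in Ioo ε 1, t ^ β) := by
        rw [le_div_iff₀ hν0]
        calc (-Real.log ε) * (β + 1) * (∫ t in Ioo ε 1, t ^ β)
            ≤ (-Real.log ε) * (β + 1) * (1/(β+1)) :=
              mul_le_mul_of_nonneg_left hν1 (mul_nonneg hL hβ1.le)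
          _ = -Real.log ε := by field_simp
    _ ≤ (∫ t in Ioo ε 1, t ^ s) / (∫ t in Ioo ε 1, t ^ β) := by gcongr

lemma tAp_lower_const {s β ε : ℝ} (hβ : -1 < β) (hε : 0 < ε) (hε2 : ε ≤ 1/2) :
    (∫ t in Ioo (1/2:ℝ) 1, t ^ s) * (β + 1)
      ≤ (∫ t in Ioo ε 1, t ^ s) / (∫ t in Ioo ε 1, t ^ β) := by
  have hε1 : ε < 1 := by linarith
  obtain ⟨hν0, hν1⟩ := tAp_nu_bounds hβ hε hε1
  have hβ1 : (0:ℝ) < β + 1 := by linarith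
  have hK := tAp_halfint_pos s
  have hnum : (∫ t in Ioo (1/2:ℝ) 1, t ^ s) ≤ ∫ t in Ioo ε 1, t ^ s := by
    refine setIntegral_mono_set (tAp_integrableOn_rpow_Ioo hε) ?_ ?_
    · refine (ae_restrict_iff' measurableSet_Ioo).2 (Filter.Eventually.of_forall fun t ht =>
        Real.rpow_nonneg (le_of_lt (hε.trans ht.1)) s)
    · exact HasSubset.Subset.eventuallyLE (Ioo_subset_Ioo hε2 le_rfl)
  calc (∫ t in Ioo (1/2:ℝ) 1, t ^ s) * (β + 1)
      ≤ (∫ t in Ioo (1/2:ℝ) 1, t ^ s) / (∫ t in Ioo ε 1, t ^ β) := by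
        rw [le_div_iff₀ hν0]
        calc (∫ t in Ioo (1/2:ℝ) 1, t ^ s) * (β + 1) * (∫ t in Ioo ε 1, t ^ β)
            ≤ (∫ t in Ioo (1/2:ℝ) 1, t ^ s) * (β + 1) * (1/(β+1)) :=
              mul_le_mul_of_nonneg_left hν1 (mul_nonneg hK.le hβ1.le)
          _ = ∫ t in Ioo (1/2:ℝ) 1, t ^ s := by field_simp
    _ ≤ (∫ t in Ioo ε 1, t ^ s) / (∫ t in Ioo ε 1, t ^ β) := by gcongr


/-- For `λ > 0`, `1 < p < ∞` with `p' = p/(p-1)`, `α ∈ ℝ`, the power weight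
`w(t) = t^α` belongs to the class `Ã_{p,λ}`, i.e. the sup over bounded intervals `B ⊂ ℝ₊` of
`((1/ν_λ(B)) ∫_B w dt) · ((1/ν_λ(B)) ∫_B t^{(2λ+1)p'} w^{-1/(p-1)} dt)^{p-1}` is finite, where
`ν_λ(B) = ∫_B t^{2λ+1} dt`, if and only if `-1 < α < p - 1 + (2λ+1) p`. -/
theorem power_weight_mem_tildeAp_iff (lam p α : ℝ) (hlam : 0 < lam) (hp : 1 < p) :
    (∃ C : ℝ, ∀ a c : ℝ, 0 ≤ a → a < c →
      ((∫ t in Ioo a c, t ^ α) / (∫ t in Ioo a c, t ^ (2 * lam + 1))) *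
        ((∫ t in Ioo a c, t ^ ((2 * lam + 1) * (p / (p - 1))) * (t ^ α) ^ (-(1 / (p - 1)))) /
            (∫ t in Ioo a c, t ^ (2 * lam + 1))) ^ (p - 1) ≤ C) ↔
      (-1 < α ∧ α < p - 1 + (2 * lam + 1) * p) := by
  have hq : (0:ℝ) < p - 1 := by linarith
  set β := 2 * lam + 1 with hβdef
  have hβ : (-1:ℝ) < β := by rw [hβdef]; linarith
  have hβ1 : (0:ℝ) < β + 1 := by linarith
  set q := p - 1 with hqdef
  set γ := β * (p / q) + α * (-(1 / q)) with hγdef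
  have hγq : γ * q = β * p - α := by
    rw [hγdef]; field_simp; ring
  constructor
  · rintro ⟨C, hC⟩
    constructor
    · -- show -1 < α
      by_contra hα
      push_neg at hα
      set K1 := ∫ t in Ioo (1/2:ℝ) 1, t ^ γ with hK1def
      have hK1 : 0 < K1 := tAp_halfint_pos γ
      set D := (β + 1) * (K1 * (β + 1)) ^ q with hDdef
      have hD : 0 < D :=
        mul_pos hβ1 (Real.rpow_pos_of_pos (mul_pos hK1 hβ1) q)
      set L := max (Real.log 2) ((C + 1) / D) with hLdef
      have hL2 : Real.log 2 ≤ L := le_max_left _ _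
      have hLpos : 0 < L := lt_of_lt_of_le (Real.log_pos one_lt_two) hL2
      set ε := Real.exp (-L) with hεdef
      have hε : 0 < ε := Real.exp_pos _
      have hε2 : ε ≤ 1/2 := by
        rw [hεdef, show (1/2:ℝ) = Real.exp (-(Real.log 2)) by
          rw [Real.exp_neg, Real.exp_log two_pos]; norm_num]
        exact Real.exp_le_exp.2 (by linarith)
      have hε1 : ε < 1 := by linarith
      have hlog : -Real.log ε = L := by rw [hεdef, Real.log_exp]; ring
      have key := hC ε 1 hε.le hε1
      rw [tAp_congr hε.le, ← hγdef] at key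
      have hF1 : L * (β + 1) ≤ (∫ t in Ioo ε 1, t ^ α) / (∫ t in Ioo ε 1, t ^ β) := by
        have h := tAp_lower_log hα hβ hε hε1
        rwa [hlog] at h
      have hF2 : K1 * (β + 1) ≤ (∫ t in Ioo ε 1, t ^ γ) / (∫ t in Ioo ε 1, t ^ β) :=
        tAp_lower_const hβ hε hε2
      have hF2q : (K1 * (β + 1)) ^ q
          ≤ ((∫ t in Ioo ε 1, t ^ γ) / (∫ t in Ioo ε 1, t ^ β)) ^ q :=
        Real.rpow_le_rpow (mul_pos hK1 hβ1).le hF2 hq.le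
      have hmul : L * (β + 1) * (K1 * (β + 1)) ^ q ≤
          ((∫ t in Ioo ε 1, t ^ α) / (∫ t in Ioo ε 1, t ^ β)) *
            ((∫ t in Ioo ε 1, t ^ γ) / (∫ t in Ioo ε 1, t ^ β)) ^ q :=
        mul_le_mul hF1 hF2q (Real.rpow_nonneg (mul_pos hK1 hβ1).le q)
          (le_trans (mul_nonneg hLpos.le hβ1.le) hF1)
      have hCD : C + 1 ≤ L * D := by
        calc C + 1 = ((C + 1) / D) * D := (div_mul_cancel₀ _ hD.ne').symm
          _ ≤ L * D := mul_le_mul_of_nonneg_right (le_max_right _ _) hD.le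
      have : C + 1 ≤ C := by
        calc C + 1 ≤ L * D := hCD
          _ = L * (β + 1) * (K1 * (β + 1)) ^ q := by rw [hDdef]; ring
          _ ≤ _ := hmul
          _ ≤ C := key
      linarith
    · -- show α < q + β * p
      by_contra hα
      push_neg at hα
      have hγle : γ ≤ -1 := by nlinarith [hγq, hq]
      set K2 := ∫ t in Ioo (1/2:ℝ) 1, t ^ α with hK2def
      have hK2 : 0 < K2 := tAp_halfint_pos α
      have hK2β : 0 < K2 * (β + 1) := mul_pos hK2 hβ1
      set Y := max ((C + 1) / (K2 * (β + 1))) 1 with hYdef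
      have hY1 : (1:ℝ) ≤ Y := le_max_right _ _
      have hY0 : (0:ℝ) ≤ Y := by linarith
      set L := max (Real.log 2) (Y ^ (1/q) / (β + 1)) with hLdef
      have hL2 : Real.log 2 ≤ L := le_max_left _ _
      have hLpos : 0 < L := lt_of_lt_of_le (Real.log_pos one_lt_two) hL2
      set ε := Real.exp (-L) with hεdef
      have hε : 0 < ε := Real.exp_pos _
      have hε2 : ε ≤ 1/2 := by
        rw [hεdef, show (1/2:ℝ) = Real.exp (-(Real.log 2)) by
          rw [Real.exp_neg, Real.exp_log two_pos]; norm_num]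
        exact Real.exp_le_exp.2 (by linarith)
      have hε1 : ε < 1 := by linarith
      have hlog : -Real.log ε = L := by rw [hεdef, Real.log_exp]; ring
      have key := hC ε 1 hε.le hε1
      rw [tAp_congr hε.le, ← hγdef] at key
      have hF1 : K2 * (β + 1) ≤ (∫ t in Ioo ε 1, t ^ α) / (∫ t in Ioo ε 1, t ^ β) :=
        tAp_lower_const hβ hε hε2
      have hF2 : L * (β + 1) ≤ (∫ t in Ioo ε 1, t ^ γ) / (∫ t in Ioo ε 1, t ^ β) := by
        have h := tAp_lower_log hγle hβ hε hε1
        rwa [hlog] at h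
      have hLβ : Y ^ (1/q) ≤ L * (β + 1) :=
        (div_le_iff₀ hβ1).mp (le_max_right _ _)
      have hYF2 : Y ≤ ((∫ t in Ioo ε 1, t ^ γ) / (∫ t in Ioo ε 1, t ^ β)) ^ q := by
        have e1 : Y = (Y ^ (1/q)) ^ q := by
          rw [← Real.rpow_mul hY0, one_div_mul_cancel hq.ne', Real.rpow_one]
        rw [e1]
        exact le_trans
          (Real.rpow_le_rpow (Real.rpow_nonneg hY0 _) hLβ hq.le)
          (Real.rpow_le_rpow (le_trans (Real.rpow_nonneg hY0 _) hLβ) hF2 hq.le)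
      have hmul : (K2 * (β + 1)) * Y ≤
          ((∫ t in Ioo ε 1, t ^ α) / (∫ t in Ioo ε 1, t ^ β)) *
            ((∫ t in Ioo ε 1, t ^ γ) / (∫ t in Ioo ε 1, t ^ β)) ^ q :=
        mul_le_mul hF1 hYF2 hY0 (le_trans hK2β.le hF1)
      have hCY : C + 1 ≤ (K2 * (β + 1)) * Y := by
        calc C + 1 = (K2 * (β + 1)) * ((C + 1) / (K2 * (β + 1))) := by
              field_simp
          _ ≤ (K2 * (β + 1)) * Y := mul_le_mul_of_nonneg_left (le_max_left _ _) hK2β.le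
      have : C + 1 ≤ C := le_trans hCY (le_trans hmul key)
      linarith
  · rintro ⟨hα1, hα2⟩
    have hγ : -1 < γ := by nlinarith [hγq, hq]
    have hα1' : (0:ℝ) < α + 1 := by linarith
    have hγ1' : (0:ℝ) < γ + 1 := by linarith
    have hmβ : (0:ℝ) < min 1 (β + 1) := lt_min one_pos hβ1
    set Cα := max 1 (α + 1) * (β + 1) / ((α + 1) * min 1 (β + 1)) with hCαdef
    set Cγ := max 1 (γ + 1) * (β + 1) / ((γ + 1) * min 1 (β + 1)) with hCγdef
    have hCα : 0 ≤ Cα := by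
      rw [hCαdef]
      exact div_nonneg (mul_nonneg (le_max_iff.2 (Or.inl zero_le_one)) hβ1.le)
        (mul_pos hα1' hmβ).le
    have hCγ : 0 ≤ Cγ := by
      rw [hCγdef]
      exact div_nonneg (mul_nonneg (le_max_iff.2 (Or.inl zero_le_one)) hβ1.le)
        (mul_pos hγ1' hmβ).le
    refine ⟨Cα * Cγ ^ q, fun a c ha hac => ?_⟩
    have hc : 0 < c := ha.trans_lt hac
    rw [tAp_congr ha, ← hγdef]
    have hν : 0 < ∫ t in Ioo a c, t ^ β := by
      rw [tAp_integral_rpow_Ioo ha hac.le hβ]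
      have h := Real.rpow_lt_rpow ha hac hβ1
      exact div_pos (by linarith) hβ1
    have hF2nn : 0 ≤ (∫ t in Ioo a c, t ^ γ) / (∫ t in Ioo a c, t ^ β) :=
      div_nonneg (setIntegral_nonneg measurableSet_Ioo fun t ht =>
        Real.rpow_nonneg (le_of_lt (lt_of_le_of_lt ha ht.1)) γ) hν.le
    have h1 : (∫ t in Ioo a c, t ^ α) / (∫ t in Ioo a c, t ^ β) ≤ Cα * c ^ (α - β) := by
      rw [hCαdef]; exact tAp_ratio_le ha hac hα1 hβ
    have h2 : (∫ t in Ioo a c, t ^ γ) / (∫ t in Ioo a c, t ^ β) ≤ Cγ * c ^ (γ - β) := by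
      rw [hCγdef]; exact tAp_ratio_le ha hac hγ hβ
    have hcab : (0:ℝ) ≤ c ^ (α - β) := Real.rpow_nonneg hc.le _
    have hcgb : (0:ℝ) ≤ c ^ (γ - β) := Real.rpow_nonneg hc.le _
    calc ((∫ t in Ioo a c, t ^ α) / (∫ t in Ioo a c, t ^ β)) *
          ((∫ t in Ioo a c, t ^ γ) / (∫ t in Ioo a c, t ^ β)) ^ q
        ≤ (Cα * c ^ (α - β)) * (Cγ * c ^ (γ - β)) ^ q := by
          apply mul_le_mul h1 (Real.rpow_le_rpow hF2nn h2 hq.le)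
            (Real.rpow_nonneg hF2nn q) (mul_nonneg hCα hcab)
      _ = (Cα * Cγ ^ q) * (c ^ (α - β) * (c ^ (γ - β)) ^ q) := by
          rw [Real.mul_rpow hCγ hcgb]; ring
      _ = Cα * Cγ ^ q := by
          rw [← Real.rpow_mul hc.le, ← Real.rpow_add hc]
          have hexp : α - β + (γ - β) * q = 0 := by nlinarith [hγq, hqdef]
          rw [hexp, Real.rpow_zero, mul_one]
end

section
/- Let λ>0 and let b(x) = log(x^{2λ}) = 2λ log x on ℝ₊. Then ‖b‖_{BMO_{Δλ}} < ∞; that is, sup over bounded intervals B=(a,c)⊂ℝ₊ of (1/μ(B))∫_B |2λ log x − b_B| dμ(x) is finite, where b_B is the μ-average of b over B. -/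
open MeasureTheory Set

/-- The Bessel measure of a set: `μ(B) = ∫_B t^{2λ} dt`. -/
noncomputable def muI (lam : ℝ) (B : Set ℝ) : ℝ := ∫ t in B, t ^ (2 * lam)

/-- The `μ`-average of `b` over `B`: `b_B = (1/μ(B)) ∫_B b dμ`. -/
noncomputable def muAvg (lam : ℝ) (b : ℝ → ℝ) (B : Set ℝ) : ℝ :=
  (∫ t in B, b t * t ^ (2 * lam)) / muI lam B

lemma rpow_integrableOn_Ioo {q a c : ℝ} (hq : -1 < q) (hac : a ≤ c) :
    IntegrableOn (fun x : ℝ => x ^ q) (Ioo a c) := by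
  have h := intervalIntegral.intervalIntegrable_rpow' (a := a) (b := c) hq
  exact ((intervalIntegrable_iff_integrableOn_Ioc_of_le hac).mp h).mono_set Ioo_subset_Ioc_self

lemma rpow_integral_Ioo {q a c : ℝ} (hq : -1 < q) (hac : a ≤ c) :
    ∫ x in Ioo a c, x ^ q = (c ^ (q + 1) - a ^ (q + 1)) / (q + 1) := by
  rw [← integral_Ioc_eq_integral_Ioo, ← intervalIntegral.integral_of_le hac,
    integral_rpow (Or.inl hq)]

/-- the function `b(x) = log(x^{2λ}) = 2λ log x` belongs to
`BMO_{Δλ}(ℝ₊)`: the sup over bounded intervals `B ⊂ ℝ₊` of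
`(1/μ(B)) ∫_B |2λ log x − b_B| dμ(x)` is finite. -/
theorem log_mem_bmo_bessel (lam : ℝ) (hlam : 0 < lam) :
    ∃ C : ℝ, ∀ a c : ℝ, 0 ≤ a → a < c →
      (∫ x in Ioo a c,
          |2 * lam * Real.log x - muAvg lam (fun y => 2 * lam * Real.log y) (Ioo a c)| *
            x ^ (2 * lam)) / muI lam (Ioo a c) ≤ C := by
  refine ⟨2, fun a c ha hac => ?_⟩
  set p : ℝ := 2 * lam with hpdef
  have hp : 0 < p := by positivity
  have hc : 0 < c := lt_of_le_of_lt ha hac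
  set k : ℝ := p * Real.log c with hkdef
  set h : ℝ → ℝ := fun x => (k - p * Real.log x) * x ^ p with hhdef
  set g : ℝ → ℝ := fun x => p * c * x ^ (p - 1) - p * x ^ p with hgdef
  set A : ℝ := muAvg lam (fun y => p * Real.log y) (Ioo a c) with hAdef
  -- measure value and positivity
  have hμval : muI lam (Ioo a c) = (c ^ (p + 1) - a ^ (p + 1)) / (p + 1) := by
    rw [muI]; exact rpow_integral_Ioo (by linarith) hac.le
  have hS : a ^ (p + 1) < c ^ (p + 1) := Real.rpow_lt_rpow ha hac (by linarith)
  have hμpos : 0 < muI lam (Ioo a c) := by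
    rw [hμval]; exact div_pos (by linarith) (by linarith)
  -- pointwise facts
  have hxfacts : ∀ x ∈ Ioo a c, 0 ≤ h x ∧ h x ≤ g x ∧ p * Real.log x ≤ k := by
    intro x hx
    have hx0 : 0 < x := lt_of_le_of_lt ha hx.1
    have hxc : x < c := hx.2
    have hlog : Real.log x ≤ Real.log c := Real.log_le_log hx0 hxc.le
    have hxp : (0:ℝ) ≤ x ^ p := (Real.rpow_pos_of_pos hx0 p).le
    have hbk : p * Real.log x ≤ k := by
      rw [hkdef]; exact mul_le_mul_of_nonneg_left hlog hp.le
    refine ⟨mul_nonneg (by linarith : (0:ℝ) ≤ k - p * Real.log x) hxp, ?_, hbk⟩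
    have hdiv : Real.log c - Real.log x ≤ c / x - 1 := by
      have := Real.log_le_sub_one_of_pos (show 0 < c / x from div_pos hc hx0)
      rwa [Real.log_div hc.ne' hx0.ne'] at this
    have h1 : h x ≤ p * (c / x - 1) * x ^ p := by
      simp only [hhdef]
      have : k - p * Real.log x ≤ p * (c / x - 1) := by
        rw [hkdef]; nlinarith
      exact mul_le_mul_of_nonneg_right this hxp
    have h2 : p * (c / x - 1) * x ^ p = g x := by
      show p * (c / x - 1) * x ^ p = p * c * x ^ (p - 1) - p * x ^ p
      have hx1 : x ^ (p - 1) = x ^ p / x := by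
        rw [Real.rpow_sub hx0, Real.rpow_one]
      rw [hx1]; field_simp
    exact h1.trans_eq h2
  -- integrability
  have hμint : IntegrableOn (fun x : ℝ => x ^ p) (Ioo a c) :=
    rpow_integrableOn_Ioo (by linarith) hac.le
  have hgint : IntegrableOn g (Ioo a c) :=
    ((rpow_integrableOn_Ioo (show (-1:ℝ) < p - 1 by linarith) hac.le).const_mul
      (p * c)).sub (hμint.const_mul p)
  have hhmeas : Measurable h :=
    (measurable_const.sub (Real.measurable_log.const_mul p)).mul
      (Real.continuous_rpow_const hp.le).measurable
  have hhint : IntegrableOn h (Ioo a c) := by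
    refine hgint.mono' hhmeas.aestronglyMeasurable.restrict ?_
    rw [ae_restrict_iff' measurableSet_Ioo]
    filter_upwards with x hx
    rcases hxfacts x hx with ⟨h0, h1, -⟩
    rw [Real.norm_eq_abs, abs_of_nonneg h0]; exact h1
  have hbint : IntegrableOn (fun x : ℝ => p * Real.log x * x ^ p) (Ioo a c) := by
    refine ((hμint.const_mul k).sub hhint).congr ?_
    filter_upwards with x
    simp only [Pi.sub_apply, hhdef]; ring
  -- key identity: ∫ h = k * μ - ∫ b dμ
  have hint_h : ∫ x in Ioo a c, h x
      = k * muI lam (Ioo a c) - ∫ x in Ioo a c, p * Real.log x * x ^ p := by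
    have e : ∫ x in Ioo a c, h x
        = ∫ x in Ioo a c, (k * x ^ p - p * Real.log x * x ^ p) := by
      congr 1; funext x; simp only [hhdef]; ring
    rw [e, integral_sub (hμint.const_mul k) hbint, integral_const_mul, muI]
  -- bounds on ∫ h
  have hinth_nonneg : 0 ≤ ∫ x in Ioo a c, h x :=
    setIntegral_nonneg measurableSet_Ioo (fun x hx => (hxfacts x hx).1)
  have hintg_val : ∫ x in Ioo a c, g x
      = p * c * ((c ^ (p - 1 + 1) - a ^ (p - 1 + 1)) / (p - 1 + 1))
        - p * ((c ^ (p + 1) - a ^ (p + 1)) / (p + 1)) := by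
    simp only [hgdef]
    rw [integral_sub ((rpow_integrableOn_Ioo (show (-1:ℝ) < p - 1 by linarith) hac.le).const_mul
      (p * c)) (hμint.const_mul p), integral_const_mul, integral_const_mul,
      rpow_integral_Ioo (show (-1:ℝ) < p - 1 by linarith) hac.le,
      rpow_integral_Ioo (show (-1:ℝ) < p by linarith) hac.le]
  have hinth_le : ∫ x in Ioo a c, h x ≤ muI lam (Ioo a c) := by
    have hmono : ∫ x in Ioo a c, h x ≤ ∫ x in Ioo a c, g x :=
      setIntegral_mono_on hhint hgint measurableSet_Ioo (fun x hx => (hxfacts x hx).2.1)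
    have hcc : c ^ (p + 1) = c ^ p * c := Real.rpow_add_one hc.ne' p
    have hap : 0 ≤ a ^ p := Real.rpow_nonneg ha p
    have haa : a ^ (p + 1) = a * a ^ p := by
      rcases eq_or_lt_of_le ha with rfl | ha0
      · rw [Real.zero_rpow (by positivity : p + 1 ≠ 0)]; simp
      · rw [Real.rpow_add_one ha0.ne']; ring
    have key : c * (c ^ p - a ^ p) ≤ c ^ (p + 1) - a ^ (p + 1) := by
      nlinarith [mul_nonneg (sub_nonneg.mpr hac.le) hap]
    have e1 : p - 1 + 1 = p := by ring
    have h1 : p * c * ((c ^ p - a ^ p) / p) = c * (c ^ p - a ^ p) := by field_simp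
    have hM : (c ^ (p + 1) - a ^ (p + 1)) / (p + 1) * (p + 1) = c ^ (p + 1) - a ^ (p + 1) :=
      div_mul_cancel₀ _ (by linarith)
    rw [hμval]
    rw [hintg_val, e1, h1] at hmono
    nlinarith [hmono, key, hM]
  -- the average
  have hAval : A = (∫ x in Ioo a c, p * Real.log x * x ^ p) / muI lam (Ioo a c) := by
    rw [hAdef, muAvg]
  have hμne : muI lam (Ioo a c) ≠ 0 := hμpos.ne'
  have hkA0 : 0 ≤ k - A := by
    rw [hAval, sub_nonneg, div_le_iff₀ hμpos]
    nlinarith [hint_h, hinth_nonneg, hμpos]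
  have hkA1 : k - A ≤ 1 := by
    rw [hAval]
    have e : k - (∫ x in Ioo a c, p * Real.log x * x ^ p) / muI lam (Ioo a c)
        = (∫ x in Ioo a c, h x) / muI lam (Ioo a c) := by
      field_simp
      linarith [hint_h]
    rw [e, div_le_one hμpos]; exact hinth_le
  -- final estimate
  have hfinal : (∫ x in Ioo a c, |p * Real.log x - A| * x ^ p)
      ≤ 2 * muI lam (Ioo a c) := by
    have hmono : (∫ x in Ioo a c, |p * Real.log x - A| * x ^ p)
        ≤ ∫ x in Ioo a c, (h x + (k - A) * x ^ p) := by
      refine integral_mono_of_nonneg ?_ (hhint.add (hμint.const_mul (k - A))) ?_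
      · filter_upwards [ae_restrict_mem measurableSet_Ioo] with x hx
        have hx0 : 0 < x := lt_of_le_of_lt ha hx.1
        positivity
      · filter_upwards [ae_restrict_mem measurableSet_Ioo] with x hx
        rcases hxfacts x hx with ⟨-, -, hbk⟩
        have hx0 : 0 < x := lt_of_le_of_lt ha hx.1
        have hxp : (0:ℝ) ≤ x ^ p := (Real.rpow_pos_of_pos hx0 p).le
        have habs : |p * Real.log x - A| ≤ (k - p * Real.log x) + (k - A) := by
          rw [abs_le]; constructor <;> linarith
        calc |p * Real.log x - A| * x ^ p
            ≤ ((k - p * Real.log x) + (k - A)) * x ^ p :=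
              mul_le_mul_of_nonneg_right habs hxp
          _ = h x + (k - A) * x ^ p := by simp only [hhdef]; ring
    have hsum : ∫ x in Ioo a c, (h x + (k - A) * x ^ p)
        = (∫ x in Ioo a c, h x) + (k - A) * muI lam (Ioo a c) := by
      rw [integral_add hhint (hμint.const_mul (k - A)), integral_const_mul, muI]
    have hprod : (k - A) * muI lam (Ioo a c) ≤ muI lam (Ioo a c) :=
      mul_le_of_le_one_left hμpos.le hkA1
    linarith [hmono, hsum, hinth_le, hprod]
  rw [div_le_iff₀ hμpos]
  exact hfinal
end
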